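/- Correctness of the diametric restriction: let A, B be δ-bounded-difference n×n matrices, C = A ⋆ B, fix block size m, and fix i, j. Suppose r ∈ [n]' ∩ K(i',j'). Then C_{i,j} = min over k such that blocks A^r_{I(i),I(k)} and B^r_{I(k),I(j)} are diametric (i.e. |A^r_{i',k'} + B^r_{k',j'}| ≤ 16δm) of (A_{i,k} + B_{k,j}). In other words, restricting the minimization to indices k whose blocks form diametric pairs does not change the min-plus value. -/

import Mathlib

/-!
Let `k₀` attain `C_{i,j}`. Moving from an entry to its block representative costs at most `2δm`,
so `A_{i',k₀'} + B_{k₀',j'}` is within `4δm` of `C_{i,j} ≤ A_{i,r} + B_{r,j}`, which in turn is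
within `4δm` of `A_{i',r} + B_{r,j'}`. Together with `Ctil ≤ A_{i',k₀'} + B_{k₀',j'}` and
`r ∈ K(i',j')` this pins `A^r_{i',k₀'} + B^r_{k₀',j'}` to `[-8δm, 8δm]`, so the minimiser `k₀`
survives the diametric restriction and the restricted minimum is still `C_{i,j}`.
-/

/-- A matrix (as a function on `Fin n`) is `δ`-bounded-difference if entries at
adjacent positions (differing by 1 in one coordinate) differ by at most `δ`. -/
def BDiff {n : ℕ} (δ : ℤ) (A : Fin n → Fin n → ℤ) : Prop :=
  ∀ i j i' j' : Fin n,
    ((i'.val = i.val + 1 ∧ j' = j) ∨ (i' = i ∧ j'.val = j.val + 1)) →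
    |A i' j' - A i j| ≤ δ

/-- Representative (first element) of the length-`m` block containing `i`. -/
def rep {n : ℕ} (m : ℕ) (i : Fin n) : Fin n :=
  ⟨m * (i.val / m),
    lt_of_le_of_lt (by rw [Nat.mul_comm]; exact Nat.div_mul_le_self _ _) i.isLt⟩

/-- Min-plus product `C = A ⋆ B`. -/
def minplus {n : ℕ} (A B : Fin n → Fin n → ℤ) (i j : Fin n) : ℤ :=
  Finset.inf' Finset.univ ⟨i, Finset.mem_univ i⟩ (fun k => A i k + B k j)

/-- Block-approximate min-plus product: minimum over representative indices. -/
def Ctil {n : ℕ} (m : ℕ) (A B : Fin n → Fin n → ℤ) (i j : Fin n) : ℤ :=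
  Finset.inf' ((Finset.univ : Finset (Fin n)).filter fun k => m ∣ k.val)
    ⟨⟨0, i.pos⟩, by simp⟩ (fun k => A (rep m i) k + B k (rep m j))

/-- Candidate set `K(i',j')`. -/
def Kset {n : ℕ} (m : ℕ) (δ : ℤ) (A B : Fin n → Fin n → ℤ) (i j : Fin n) :
    Finset (Fin n) :=
  Finset.univ.filter
    (fun k => m ∣ k.val ∧
      A (rep m i) k + B k (rep m j) ≤ Ctil m A B i j + 8 * δ * m)

lemma Fin.abs_sub_le_mul_of_abs_succ_sub_le {n : ℕ} {δ : ℤ} {f : Fin n → ℤ}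
    (hf : ∀ a b : Fin n, b.val = a.val + 1 → |f b - f a| ≤ δ) (d : ℕ) :
    ∀ {a b : Fin n}, b.val = a.val + d → |f b - f a| ≤ δ * d := by
  induction d with
  | zero =>
    intro a b hab
    simp [Fin.ext (by omega : b.val = a.val)]
  | succ d ih =>
    intro a b hab
    let c : Fin n := ⟨a.val + d, by omega⟩
    calc |f b - f a| ≤ |f b - f c| + |f c - f a| := abs_sub_le _ _ _
      _ ≤ δ + δ * d := add_le_add (hf c b (by simp [c]; omega)) (ih rfl)
      _ = δ * (d + 1 : ℕ) := by push_cast; ring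

lemma val_eq_rep_val_add_mod {n : ℕ} (m : ℕ) (i : Fin n) :
    i.val = (rep m i).val + i.val % m := by
  simp only [rep]
  exact (Nat.div_add_mod i.val m).symm

lemma dvd_rep_val {n : ℕ} (m : ℕ) (i : Fin n) : m ∣ (rep m i).val :=
  Dvd.intro _ rfl

lemma rep_eq_self {n : ℕ} {m : ℕ} {r : Fin n} (hr : m ∣ r.val) : rep m r = r :=
  Fin.ext (Nat.mul_div_cancel' hr)

lemma BDiff.abs_sub_rep_le {n : ℕ} {δ : ℤ} {A : Fin n → Fin n → ℤ} (hA : BDiff δ A)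
    (hδ : 0 ≤ δ) {m : ℕ} (hm : 0 < m) (i k : Fin n) :
    |A i k - A (rep m i) (rep m k)| ≤ 2 * δ * m := by
  have hrow : |A i k - A (rep m i) k| ≤ δ * (i.val % m : ℕ) :=
    Fin.abs_sub_le_mul_of_abs_succ_sub_le (f := fun i => A i k)
      (fun a b hab => hA a k b k (Or.inl ⟨hab, rfl⟩)) _ (val_eq_rep_val_add_mod m i)
  have hcol : |A (rep m i) k - A (rep m i) (rep m k)| ≤ δ * (k.val % m : ℕ) :=
    Fin.abs_sub_le_mul_of_abs_succ_sub_le (f := A (rep m i))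
      (fun a b hab => hA (rep m i) a (rep m i) b (Or.inr ⟨rfl, hab⟩)) _
      (val_eq_rep_val_add_mod m k)
  have hi : δ * (i.val % m : ℕ) ≤ δ * m :=
    mul_le_mul_of_nonneg_left (by exact_mod_cast (Nat.mod_lt _ hm).le) hδ
  have hk : δ * (k.val % m : ℕ) ≤ δ * m :=
    mul_le_mul_of_nonneg_left (by exact_mod_cast (Nat.mod_lt _ hm).le) hδ
  calc |A i k - A (rep m i) (rep m k)|
      ≤ |A i k - A (rep m i) k| + |A (rep m i) k - A (rep m i) (rep m k)| := abs_sub_le _ _ _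
    _ ≤ 2 * δ * m := by linarith

lemma exists_minplus_eq {n : ℕ} (A B : Fin n → Fin n → ℤ) (i j : Fin n) :
    ∃ k, minplus A B i j = A i k + B k j ∧ ∀ k', A i k + B k j ≤ A i k' + B k' j := by
  obtain ⟨k, -, hk⟩ := Finset.exists_mem_eq_inf' ⟨i, Finset.mem_univ i⟩ (fun k => A i k + B k j)
  exact ⟨k, hk, fun k' => hk ▸ Finset.inf'_le _ (Finset.mem_univ k')⟩

lemma Ctil_le {n : ℕ} {m : ℕ} (A B : Fin n → Fin n → ℤ) (i j : Fin n) {k : Fin n}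
    (hk : m ∣ k.val) : Ctil m A B i j ≤ A (rep m i) k + B k (rep m j) :=
  Finset.inf'_le _ (Finset.mem_filter.2 ⟨Finset.mem_univ k, hk⟩)

lemma abs_rep_add_rep_le_of_forall_le {n : ℕ} {δ : ℤ} (hδ : 0 ≤ δ) {A B : Fin n → Fin n → ℤ}
    (hA : BDiff δ A) (hB : BDiff δ B) {m : ℕ} {i j r k : Fin n} (hr : m ∣ r.val)
    (hrK : r ∈ Kset m δ A B i j) (hk : ∀ k', A i k + B k j ≤ A i k' + B k' j) :
    |(A (rep m i) (rep m k) - A (rep m i) r) + (B (rep m k) (rep m j) - B r (rep m j))|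
      ≤ 16 * δ * m := by
  rcases Nat.eq_zero_or_pos m with rfl | hm
  · have hkr : rep 0 k = r := Fin.ext (by simpa [rep] using (Nat.eq_zero_of_zero_dvd hr).symm)
    simp [hkr]
  have hrC := (Finset.mem_filter.1 hrK).2.2
  have hCk := Ctil_le A B i j (dvd_rep_val m k)
  have hAik := abs_le.1 (hA.abs_sub_rep_le hδ hm i k)
  have hBkj := abs_le.1 (hB.abs_sub_rep_le hδ hm k j)
  have hAir := abs_le.1 (hA.abs_sub_rep_le hδ hm i r)
  have hBrj := abs_le.1 (hB.abs_sub_rep_le hδ hm r j)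
  rw [rep_eq_self hr] at hAir hBrj
  have hkr := hk r
  have hδm : 0 ≤ δ * m := mul_nonneg hδ (Int.natCast_nonneg m)
  rw [abs_le]
  constructor <;> linarith

lemma Finset.inf_coe_eq_of_mem_of_forall_le {ι α : Type*} [LinearOrder α] {s : Finset ι}
    {f : ι → α} {k : ι} (hk : k ∈ s) (hle : ∀ k', f k ≤ f k') :
    s.inf (fun k' => (f k' : WithTop α)) = f k :=
  le_antisymm (Finset.inf_le hk) (Finset.le_inf fun k' _ => WithTop.coe_le_coe.2 (hle k'))

theorem stmt19_general {n : ℕ} (δ : ℤ) (hδ : 0 < δ) (A B : Fin n → Fin n → ℤ)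
    (hA : BDiff δ A) (hB : BDiff δ B) (m : ℕ) (i j r : Fin n)
    (hr : m ∣ r.val) (hrK : r ∈ Kset m δ A B i j) :
    ((minplus A B i j : ℤ) : WithTop ℤ) =
      (Finset.univ.filter (fun k : Fin n =>
          |(A (rep m i) (rep m k) - A (rep m i) r) +
            (B (rep m k) (rep m j) - B r (rep m j))| ≤ 16 * δ * m)).inf
        (fun k => ((A i k + B k j : ℤ) : WithTop ℤ)) := by
  obtain ⟨k, hCk, hk⟩ := exists_minplus_eq A B i j
  have hdiam := abs_rep_add_rep_le_of_forall_le hδ.le hA hB hr hrK hk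
  rw [hCk]
  exact (Finset.inf_coe_eq_of_mem_of_forall_le (f := fun k => A i k + B k j)
    (Finset.mem_filter.2 ⟨Finset.mem_univ k, hdiam⟩) hk).symm

/-- correctness of the diametric restriction: if `r` is a
representative index with `r ∈ K(i',j')`, then the min-plus value `C_{i,j}`
equals the minimum of `A_{i,k} + B_{k,j}` over those `k` whose blocks form a
diametric pair, i.e. `|A^r_{i',k'} + B^r_{k',j'}| ≤ 16δm`. -/
theorem stmt19 {n : ℕ} (δ : ℤ) (hδ : 0 < δ) (A B : Fin n → Fin n → ℤ)
    (hA : BDiff δ A) (hB : BDiff δ B) (m : ℕ) (hm : m ∣ n) (i j r : Fin n)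
    (hr : m ∣ r.val) (hrK : r ∈ Kset m δ A B i j) :
    ((minplus A B i j : ℤ) : WithTop ℤ) =
      (Finset.univ.filter (fun k : Fin n =>
          |(A (rep m i) (rep m k) - A (rep m i) r) +
            (B (rep m k) (rep m j) - B r (rep m j))| ≤ 16 * δ * m)).inf
        (fun k => ((A i k + B k j : ℤ) : WithTop ℤ)) :=
  stmt19_general δ hδ A B hA hB m i j r hr hrK
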